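/- arXiv:1501.02788 — 6 statements merged into one kernel-verified Lean document; each statement's English description precedes it below -/
import Mathlib

section
/- Under these assumptions, define M(a,E,c) := ∫₀^{T(a,E,c)} u(z; a,E,c) dz, φ₀(z) := ∂_aT·∂_Eu(z) − ∂_ET·∂_au(z), φ₂(z) := det(∂(u(z;·), T, M)/∂(a,E,c)), and {T,M}_{a,E} := ∂_aT·∂_EM − ∂_ET·∂_aM. Then at every (z,a,E,c): L₀φ₀ = 0 and L₀φ₂ = −{T,M}_{a,E}·∂_z u; i.e., φ₀ lies in the kernel of L₀ while φ₂ generates a Jordan chain of height one above the kernel element {T,M}_{a,E}·∂_z u. -/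
/-- The linearized operator `𝓛v = v'' + c·v + f'(U)·v` acting pointwise in `z`. -/
noncomputable def Lcal (f : ℝ → ℝ) (U : ℝ → ℝ) (c : ℝ) (v : ℝ → ℝ) (z : ℝ) : ℝ :=
  iteratedDeriv 2 v z + c * v z + deriv f (U z) * v z

/-- The unmodulated linearized operator `L₀v = ∂_z(𝓛v)`. -/
noncomputable def L0 (f : ℝ → ℝ) (U : ℝ → ℝ) (c : ℝ) (v : ℝ → ℝ) (z : ℝ) : ℝ :=
  deriv (Lcal f U c v) z

/-- directional derivative on ℝ⁴ -/
noncomputable def Dv (v : ℝ × ℝ × ℝ × ℝ) (g : (ℝ × ℝ × ℝ × ℝ) → ℝ) :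
    (ℝ × ℝ × ℝ × ℝ) → ℝ :=
  fun x => fderiv ℝ g x v

lemma Dv_contDiff (v : ℝ × ℝ × ℝ × ℝ) {g : (ℝ × ℝ × ℝ × ℝ) → ℝ}
    (hg : ContDiff ℝ (⊤ : ℕ∞) g) : ContDiff ℝ (⊤ : ℕ∞) (Dv v g) := by
  have h1 : ContDiff ℝ (⊤ : ℕ∞) (fderiv ℝ g) := hg.fderiv_right (by simp)
  exact (ContinuousLinearMap.apply ℝ ℝ v).contDiff.comp h1

lemma deriv_comp_line {g : (ℝ × ℝ × ℝ × ℝ) → ℝ} {L : ℝ → ℝ × ℝ × ℝ × ℝ}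
    {v : ℝ × ℝ × ℝ × ℝ} {t : ℝ}
    (hg : DifferentiableAt ℝ g (L t)) (hL : HasDerivAt L v t) :
    deriv (fun s => g (L s)) t = fderiv ℝ g (L t) v :=
  (hg.hasFDerivAt.comp_hasDerivAt t hL).deriv

lemma line1 (a E c s : ℝ) :
    HasDerivAt (fun t : ℝ => ((t, a, E, c) : ℝ × ℝ × ℝ × ℝ)) (1, 0, 0, 0) s :=
  (hasDerivAt_id s).prodMk (hasDerivAt_const s (a, E, c))

lemma line2 (z E c s : ℝ) :
    HasDerivAt (fun t : ℝ => ((z, t, E, c) : ℝ × ℝ × ℝ × ℝ)) (0, 1, 0, 0) s :=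
  (hasDerivAt_const s z).prodMk ((hasDerivAt_id s).prodMk (hasDerivAt_const s (E, c)))

lemma line3 (z a c s : ℝ) :
    HasDerivAt (fun t : ℝ => ((z, a, t, c) : ℝ × ℝ × ℝ × ℝ)) (0, 0, 1, 0) s :=
  (hasDerivAt_const s z).prodMk ((hasDerivAt_const s a).prodMk
    ((hasDerivAt_id s).prodMk (hasDerivAt_const s c)))

lemma line4 (z a E s : ℝ) :
    HasDerivAt (fun t : ℝ => ((z, a, E, t) : ℝ × ℝ × ℝ × ℝ)) (0, 0, 0, 1) s :=
  (hasDerivAt_const s z).prodMk ((hasDerivAt_const s a).prodMk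
    ((hasDerivAt_const s E).prodMk (hasDerivAt_id s)))

lemma line1_contDiff (a E c : ℝ) :
    ContDiff ℝ (⊤ : ℕ∞) (fun t : ℝ => ((t, a, E, c) : ℝ × ℝ × ℝ × ℝ)) :=
  contDiff_id.prodMk contDiff_const

lemma Dv_comm {g : (ℝ × ℝ × ℝ × ℝ) → ℝ} (hg : ContDiff ℝ (⊤ : ℕ∞) g)
    (v w x : ℝ × ℝ × ℝ × ℝ) : Dv v (Dv w g) x = Dv w (Dv v g) x := by
  have hd : Differentiable ℝ (fderiv ℝ g) :=
    (hg.fderiv_right (m := (⊤ : ℕ∞)) (by simp)).differentiable (by simp)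
  have key : ∀ p q : ℝ × ℝ × ℝ × ℝ,
      fderiv ℝ (fun y => fderiv ℝ g y p) x q = fderiv ℝ (fderiv ℝ g) x q p := by
    intro p q
    have h : (fun y => fderiv ℝ g y p)
        = (ContinuousLinearMap.apply ℝ ℝ p) ∘ (fderiv ℝ g) := rfl
    rw [h, fderiv_comp x (ContinuousLinearMap.apply ℝ ℝ p).differentiableAt (hd x)]
    simp
  have symm := second_derivative_symmetric
    (fun y => (hg.differentiable (by simp) y).hasFDerivAt) (hd x).hasFDerivAt v w
  show fderiv ℝ (fun y => fderiv ℝ g y w) x v = fderiv ℝ (fun y => fderiv ℝ g y v) x w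
  rw [key, key, symm]

lemma iterTwo (g : ℝ → ℝ) : iteratedDeriv 2 g = deriv (deriv g) := by
  rw [show (2 : ℕ) = 1 + 1 from rfl, iteratedDeriv_succ, iteratedDeriv_one]

lemma iter2_line {F : (ℝ × ℝ × ℝ × ℝ) → ℝ} (hF : ContDiff ℝ (⊤ : ℕ∞) F) (z a E c : ℝ) :
    iteratedDeriv 2 (fun s => F (s, a, E, c)) z
      = Dv (1,0,0,0) (Dv (1,0,0,0) F) (z, a, E, c) := by
  have h1 : deriv (fun s => F (s, a, E, c)) = fun s => Dv (1,0,0,0) F (s, a, E, c) := by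
    funext s
    exact deriv_comp_line ((hF.differentiable (by simp)).differentiableAt) (line1 a E c s)
  rw [iterTwo, h1]
  exact deriv_comp_line (((Dv_contDiff _ hF).differentiable (by simp)).differentiableAt)
    (line1 a E c z)

noncomputable def P4 : (ℝ × ℝ × ℝ × ℝ) →L[ℝ] ℝ :=
  (ContinuousLinearMap.snd ℝ ℝ ℝ).comp ((ContinuousLinearMap.snd ℝ ℝ (ℝ × ℝ)).comp
    (ContinuousLinearMap.snd ℝ ℝ (ℝ × ℝ × ℝ)))

noncomputable def P2 : (ℝ × ℝ × ℝ × ℝ) →L[ℝ] ℝ :=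
  (ContinuousLinearMap.fst ℝ ℝ (ℝ × ℝ)).comp (ContinuousLinearMap.snd ℝ ℝ (ℝ × ℝ × ℝ))

lemma P4_apply (x : ℝ × ℝ × ℝ × ℝ) : P4 x = x.2.2.2 := rfl
lemma P2_apply (x : ℝ × ℝ × ℝ × ℝ) : P2 x = x.2.1 := rfl

lemma profile_deriv {f : ℝ → ℝ} (hf : ContDiff ℝ 2 f) {F : (ℝ × ℝ × ℝ × ℝ) → ℝ}
    (hF : ContDiff ℝ (⊤ : ℕ∞) F)
    (hp : ∀ x : ℝ × ℝ × ℝ × ℝ,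
      Dv (1,0,0,0) (Dv (1,0,0,0) F) x + x.2.2.2 * F x + f (F x) = x.2.1)
    (v x : ℝ × ℝ × ℝ × ℝ) :
    Dv (1,0,0,0) (Dv (1,0,0,0) (Dv v F)) x + v.2.2.2 * F x + x.2.2.2 * Dv v F x
      + deriv f (F x) * Dv v F x = v.2.1 := by
  have hzz : ContDiff ℝ (⊤ : ℕ∞) (Dv (1,0,0,0) (Dv (1,0,0,0) F)) :=
    Dv_contDiff _ (Dv_contDiff _ hF)
  have hFx : HasFDerivAt F (fderiv ℝ F x) x := ((hF.differentiable (by simp)) x).hasFDerivAt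
  have Hzz : HasFDerivAt (Dv (1,0,0,0) (Dv (1,0,0,0) F))
      (fderiv ℝ (Dv (1,0,0,0) (Dv (1,0,0,0) F)) x) x :=
    ((hzz.differentiable (by simp)) x).hasFDerivAt
  have Hmul : HasFDerivAt (fun y : ℝ × ℝ × ℝ × ℝ => y.2.2.2 * F y)
      (x.2.2.2 • fderiv ℝ F x + F x • P4) x := by
    have := (P4.hasFDerivAt (x := x)).mul hFx
    exact this
  have Hcomp : HasFDerivAt (fun y => f (F y)) (deriv f (F x) • fderiv ℝ F x) x :=
    HasDerivAt.comp_hasFDerivAt x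
      ((hf.differentiable (by simp)) (F x)).hasDerivAt hFx
  have H : HasFDerivAt (fun y : ℝ × ℝ × ℝ × ℝ =>
      Dv (1,0,0,0) (Dv (1,0,0,0) F) y + y.2.2.2 * F y + f (F y))
      (fderiv ℝ (Dv (1,0,0,0) (Dv (1,0,0,0) F)) x + (x.2.2.2 • fderiv ℝ F x + F x • P4)
        + deriv f (F x) • fderiv ℝ F x) x := (Hzz.add Hmul).add Hcomp
  have heq : (fun y : ℝ × ℝ × ℝ × ℝ =>
      Dv (1,0,0,0) (Dv (1,0,0,0) F) y + y.2.2.2 * F y + f (F y))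
      = fun y : ℝ × ℝ × ℝ × ℝ => y.2.1 := by
    funext y; exact hp y
  rw [heq] at H
  have HP2 : HasFDerivAt (fun y : ℝ × ℝ × ℝ × ℝ => y.2.1) P2 x := P2.hasFDerivAt
  have huniq := H.unique HP2
  have happ := congrArg (fun (L : (ℝ × ℝ × ℝ × ℝ) →L[ℝ] ℝ) => L v) huniq
  simp only [ContinuousLinearMap.add_apply, ContinuousLinearMap.smul_apply,
    smul_eq_mul, P4_apply, P2_apply] at happ
  have comm1 : Dv v (Dv (1,0,0,0) F) = Dv (1,0,0,0) (Dv v F) :=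
    funext fun y => Dv_comm hF v (1,0,0,0) y
  have comm : fderiv ℝ (Dv (1,0,0,0) (Dv (1,0,0,0) F)) x v
      = Dv (1,0,0,0) (Dv (1,0,0,0) (Dv v F)) x := by
    have h1 : fderiv ℝ (Dv (1,0,0,0) (Dv (1,0,0,0) F)) x v
        = Dv v (Dv (1,0,0,0) (Dv (1,0,0,0) F)) x := rfl
    rw [h1, Dv_comm (Dv_contDiff _ hF) v (1,0,0,0) x, comm1]
  have hDvF : fderiv ℝ F x v = Dv v F x := rfl
  rw [comm, hDvF] at happ
  linarith

lemma deriv_contDiff {g : ℝ → ℝ} (hg : ContDiff ℝ (⊤ : ℕ∞) g) : ContDiff ℝ (⊤ : ℕ∞) (deriv g) := by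
  have h1 : ContDiff ℝ (⊤ : ℕ∞) (fderiv ℝ g) := hg.fderiv_right (by simp)
  have h2 : ContDiff ℝ (⊤ : ℕ∞) (fun t => fderiv ℝ g t 1) :=
    (ContinuousLinearMap.apply ℝ ℝ (1 : ℝ)).contDiff.comp h1
  exact h2

lemma deriv_comb {p q r : ℝ → ℝ} (hp : Differentiable ℝ p) (hq : Differentiable ℝ q)
    (hr : Differentiable ℝ r) (k₁ k₂ k₃ : ℝ) :
    deriv (fun t => k₁ * p t + k₂ * q t + k₃ * r t)
      = fun t => k₁ * deriv p t + k₂ * deriv q t + k₃ * deriv r t := by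
  funext t
  exact ((((hp t).hasDerivAt.const_mul k₁).add
    ((hq t).hasDerivAt.const_mul k₂)).add ((hr t).hasDerivAt.const_mul k₃)).deriv

lemma Lcal_comb (f : ℝ → ℝ) (U : ℝ → ℝ) (c : ℝ) {g₁ g₂ g₃ : ℝ → ℝ}
    (h₁ : ContDiff ℝ (⊤ : ℕ∞) g₁) (h₂ : ContDiff ℝ (⊤ : ℕ∞) g₂) (h₃ : ContDiff ℝ (⊤ : ℕ∞) g₃)
    (k₁ k₂ k₃ : ℝ) (s : ℝ) :
    Lcal f U c (fun t => k₁ * g₁ t + k₂ * g₂ t + k₃ * g₃ t) s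
      = k₁ * Lcal f U c g₁ s + k₂ * Lcal f U c g₂ s + k₃ * Lcal f U c g₃ s := by
  have d₁ := h₁.differentiable (by simp)
  have d₂ := h₂.differentiable (by simp)
  have d₃ := h₃.differentiable (by simp)
  have d₁' : Differentiable ℝ (deriv g₁) := (deriv_contDiff h₁).differentiable (by simp)
  have d₂' : Differentiable ℝ (deriv g₂) := (deriv_contDiff h₂).differentiable (by simp)
  have d₃' : Differentiable ℝ (deriv g₃) := (deriv_contDiff h₃).differentiable (by simp)
  simp only [Lcal, iterTwo, deriv_comb d₁ d₂ d₃, deriv_comb d₁' d₂' d₃']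
  ring

/-- Kernel and Jordan-chain relations of the generalized-kernel lemma:
`L₀φ₀ = 0` and `L₀φ₂ = −{T,M}_{a,E}·∂_z u`, where
`φ₀ = {T,u}_{a,E}` and `φ₂ = {u,T,M}_{a,E,c}`. -/
theorem stmt_7 (f : ℝ → ℝ) (hf : ContDiff ℝ 2 f)
    (u : ℝ → ℝ → ℝ → ℝ → ℝ)
    (hu : ContDiff ℝ (⊤ : ℕ∞) (fun p : ℝ × ℝ × ℝ × ℝ => u p.1 p.2.1 p.2.2.1 p.2.2.2))
    (hprof : ∀ z a E c : ℝ,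
      iteratedDeriv 2 (fun s => u s a E c) z + c * u z a E c + f (u z a E c) = a)
    (T : ℝ → ℝ → ℝ → ℝ)
    (hT : ContDiff ℝ (⊤ : ℕ∞) (fun p : ℝ × ℝ × ℝ => T p.1 p.2.1 p.2.2))
    (hTpos : ∀ a E c : ℝ, 0 < T a E c)
    (hper : ∀ z a E c : ℝ, u (z + T a E c) a E c = u z a E c)
    (M : ℝ → ℝ → ℝ → ℝ)
    (hM : ∀ a E c : ℝ, M a E c = ∫ z in (0:ℝ)..(T a E c), u z a E c) :
    ∀ z a E c : ℝ,
      L0 f (fun s => u s a E c) c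
        (fun s => deriv (fun a' => T a' E c) a * deriv (fun E' => u s a E' c) E
          - deriv (fun E' => T a E' c) E * deriv (fun a' => u s a' E c) a) z = 0 ∧
      L0 f (fun s => u s a E c) c
        (fun s => Matrix.det
          !![deriv (fun a' => u s a' E c) a, deriv (fun E' => u s a E' c) E,
               deriv (fun c' => u s a E c') c;
             deriv (fun a' => T a' E c) a, deriv (fun E' => T a E' c) E,
               deriv (fun c' => T a E c') c;
             deriv (fun a' => M a' E c) a, deriv (fun E' => M a E' c) E,
               deriv (fun c' => M a E c') c]) z
        = -(deriv (fun a' => T a' E c) a * deriv (fun E' => M a E' c) E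
             - deriv (fun E' => T a E' c) E * deriv (fun a' => M a' E c) a)
            * deriv (fun s => u s a E c) z := by
  intro z a E c
  set F : (ℝ × ℝ × ℝ × ℝ) → ℝ := fun p => u p.1 p.2.1 p.2.2.1 p.2.2.2 with hFdef
  have hF : ContDiff ℝ (⊤ : ℕ∞) F := hu
  have hp : ∀ x : ℝ × ℝ × ℝ × ℝ,
      Dv (1,0,0,0) (Dv (1,0,0,0) F) x + x.2.2.2 * F x + f (F x) = x.2.1 := by
    rintro ⟨z', a', E', c'⟩
    have h : iteratedDeriv 2 (fun s => F (s, a', E', c')) z' + c' * F (z', a', E', c')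
        + f (F (z', a', E', c')) = a' := hprof z' a' E' c'
    rw [iter2_line hF z' a' E' c'] at h
    exact h
  have hUa : ∀ s : ℝ, deriv (fun a' => u s a' E c) a = Dv (0,1,0,0) F (s, a, E, c) :=
    fun s => deriv_comp_line ((hF.differentiable (by simp)).differentiableAt) (line2 s E c a)
  have hUE : ∀ s : ℝ, deriv (fun E' => u s a E' c) E = Dv (0,0,1,0) F (s, a, E, c) :=
    fun s => deriv_comp_line ((hF.differentiable (by simp)).differentiableAt) (line3 s a c E)
  have hUc : ∀ s : ℝ, deriv (fun c' => u s a E c') c = Dv (0,0,0,1) F (s, a, E, c) :=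
    fun s => deriv_comp_line ((hF.differentiable (by simp)).differentiableAt) (line4 s a E c)
  have hline : ∀ v : ℝ × ℝ × ℝ × ℝ, ContDiff ℝ (⊤ : ℕ∞) (fun t : ℝ => Dv v F (t, a, E, c)) :=
    fun v => (Dv_contDiff v hF).comp (line1_contDiff a E c)
  have LA : ∀ (v : ℝ × ℝ × ℝ × ℝ) (s : ℝ),
      Lcal f (fun s => u s a E c) c (fun t => Dv v F (t, a, E, c)) s
        = v.2.1 - v.2.2.2 * u s a E c := by
    intro v s
    have hmain := profile_deriv hf hF hp v (s, a, E, c)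
    have hit : iteratedDeriv 2 (fun t => Dv v F (t, a, E, c)) s
        = Dv (1,0,0,0) (Dv (1,0,0,0) (Dv v F)) (s, a, E, c) :=
      iter2_line (Dv_contDiff v hF) s a E c
    have e1 : ((s, a, E, c) : ℝ × ℝ × ℝ × ℝ).2.2.2 = c := rfl
    have e2 : F (s, a, E, c) = u s a E c := rfl
    rw [e1, e2] at hmain
    simp only [Lcal, hit]
    linarith
  have LAa : ∀ s : ℝ, Lcal f (fun s => u s a E c) c
      (fun t => Dv (0,1,0,0) F (t, a, E, c)) s = 1 - 0 * u s a E c := LA (0,1,0,0)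
  have LAE : ∀ s : ℝ, Lcal f (fun s => u s a E c) c
      (fun t => Dv (0,0,1,0) F (t, a, E, c)) s = 0 - 0 * u s a E c := LA (0,0,1,0)
  have LAc : ∀ s : ℝ, Lcal f (fun s => u s a E c) c
      (fun t => Dv (0,0,0,1) F (t, a, E, c)) s = 0 - 1 * u s a E c := LA (0,0,0,1)
  constructor
  · -- φ₀
    have hφ : (fun s => deriv (fun a' => T a' E c) a * deriv (fun E' => u s a E' c) E
          - deriv (fun E' => T a E' c) E * deriv (fun a' => u s a' E c) a)
        = fun s => (-(deriv (fun E' => T a E' c) E)) * Dv (0,1,0,0) F (s, a, E, c)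
            + (deriv (fun a' => T a' E c) a) * Dv (0,0,1,0) F (s, a, E, c)
            + 0 * Dv (0,0,0,1) F (s, a, E, c) := by
      funext s
      rw [hUE s, hUa s]; ring
    have hLc : Lcal f (fun s => u s a E c) c
        (fun s => deriv (fun a' => T a' E c) a * deriv (fun E' => u s a E' c) E
          - deriv (fun E' => T a E' c) E * deriv (fun a' => u s a' E c) a)
        = fun _ : ℝ => -(deriv (fun E' => T a E' c) E) := by
      funext s
      rw [hφ, Lcal_comb f _ c (hline _) (hline _) (hline _) _ _ _ s,
        LAa s, LAE s, LAc s]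
      ring
    simp only [L0, hLc, deriv_const]
  · -- φ₂
    have hdet : (fun s => Matrix.det
          !![deriv (fun a' => u s a' E c) a, deriv (fun E' => u s a E' c) E,
               deriv (fun c' => u s a E c') c;
             deriv (fun a' => T a' E c) a, deriv (fun E' => T a E' c) E,
               deriv (fun c' => T a E c') c;
             deriv (fun a' => M a' E c) a, deriv (fun E' => M a E' c) E,
               deriv (fun c' => M a E c') c])
        = fun s => (deriv (fun E' => T a E' c) E * deriv (fun c' => M a E c') c
              - deriv (fun c' => T a E c') c * deriv (fun E' => M a E' c) E)
                * Dv (0,1,0,0) F (s, a, E, c)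
            + (deriv (fun c' => T a E c') c * deriv (fun a' => M a' E c) a
              - deriv (fun a' => T a' E c) a * deriv (fun c' => M a E c') c)
                * Dv (0,0,1,0) F (s, a, E, c)
            + (deriv (fun a' => T a' E c) a * deriv (fun E' => M a E' c) E
              - deriv (fun E' => T a E' c) E * deriv (fun a' => M a' E c) a)
                * Dv (0,0,0,1) F (s, a, E, c) := by
      funext s
      rw [hUa s, hUE s, hUc s]
      simp [Matrix.det_fin_three]
      ring
    have hLc2 : Lcal f (fun s => u s a E c) c
        (fun s => Matrix.det
          !![deriv (fun a' => u s a' E c) a, deriv (fun E' => u s a E' c) E,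
               deriv (fun c' => u s a E c') c;
             deriv (fun a' => T a' E c) a, deriv (fun E' => T a E' c) E,
               deriv (fun c' => T a E c') c;
             deriv (fun a' => M a' E c) a, deriv (fun E' => M a E' c) E,
               deriv (fun c' => M a E c') c])
        = fun s : ℝ => (deriv (fun E' => T a E' c) E * deriv (fun c' => M a E c') c
              - deriv (fun c' => T a E c') c * deriv (fun E' => M a E' c) E)
            - (deriv (fun a' => T a' E c) a * deriv (fun E' => M a E' c) E
              - deriv (fun E' => T a E' c) E * deriv (fun a' => M a' E c) a) * u s a E c := by
      funext s
      rw [hdet, Lcal_comb f _ c (hline _) (hline _) (hline _) _ _ _ s,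
        LAa s, LAE s, LAc s]
      ring
    have hd : HasDerivAt (fun s => u s a E c) (Dv (1,0,0,0) F (z, a, E, c)) z :=
      ((hF.differentiable (by simp)) _).hasFDerivAt.comp_hasDerivAt z (line1 a E c z)
    have hderiv : deriv (fun s => u s a E c) z = Dv (1,0,0,0) F (z, a, E, c) := hd.deriv
    have hfinal : deriv (fun s : ℝ => (deriv (fun E' => T a E' c) E * deriv (fun c' => M a E c') c
              - deriv (fun c' => T a E c') c * deriv (fun E' => M a E' c) E)
            - (deriv (fun a' => T a' E c) a * deriv (fun E' => M a E' c) E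
              - deriv (fun E' => T a E' c) E * deriv (fun a' => M a' E c) a) * u s a E c) z
        = -((deriv (fun a' => T a' E c) a * deriv (fun E' => M a E' c) E
              - deriv (fun E' => T a E' c) E * deriv (fun a' => M a' E c) a)
            * Dv (1,0,0,0) F (z, a, E, c)) :=
      ((hd.const_mul _).const_sub _).deriv
    simp only [L0, hLc2]
    rw [hfinal, hderiv]
    ring
end

section
/- Let a, c, k ∈ ℝ with k > 0, c < 0 and k² < c² − 4a. Set s := √(c² − 4a), γ := s/√(s² − k²), and define u : ℝ → ℝ by u(z) := k²/(√(s² − k²)·(γ − cos(k z))) − (s + c)/2. Then ∫₀^{2π/k} u(z) dz = 2π − (π/k)(√(c² − 4a) + c). -/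
/-!
The constant part of `u` contributes `(π/k)(s + c)`. After the substitution `θ = k z` the rest
is `(k/b) ∫₀^{2π} dθ / (γ - cos θ)` with `b = √(s² - k²)`, and
`∫₀^{2π} dθ / (γ - cos θ) = 2π / √(γ² - 1)` is the Poisson integral formula for the constant
harmonic function `1` at the point `r = γ - √(γ² - 1)` of the unit disc: since `r + r⁻¹ = 2γ`,
the Poisson kernel `(1 - r²) / (1 - 2 r cos θ + r²)` equals `√(γ² - 1) / (γ - cos θ)`.
Finally `√(γ² - 1) = k / b`.
-/

open Real

lemma poissonKernel_zero_circleMap_zero_one (r θ : ℝ) :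
    poissonKernel 0 r (circleMap 0 1 θ) = (1 - r ^ 2) / (1 - 2 * r * cos θ + r ^ 2) := by
  have hnorm : ‖circleMap 0 1 θ - r‖ ^ 2 = 1 - 2 * r * cos θ + r ^ 2 := by
    rw [← Complex.normSq_eq_norm_sq, Complex.normSq_apply]
    simp [circleMap, Complex.exp_ofReal_mul_I_re, Complex.exp_ofReal_mul_I_im]
    nlinarith [sin_sq_add_cos_sq θ]
  simp [poissonKernel, hnorm]

theorem integral_real_poissonKernel {r : ℝ} (hr : |r| < 1) :
    ∫ θ in 0..2 * π, (1 - r ^ 2) / (1 - 2 * r * cos θ + r ^ 2) = 2 * π := by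
  have h := InnerProductSpace.HarmonicOnNhd.circleAverage_poissonKernel_smul
    (InnerProductSpace.harmonicOnNhd_const (1 : ℝ)) (c := 0) (R := 1) (w := r)
    (by simpa using hr)
  simp only [circleAverage_def, smul_eq_mul, Pi.mul_apply, mul_one,
    poissonKernel_zero_circleMap_zero_one] at h
  field_simp at h
  linarith

theorem integral_inv_sub_cos {γ : ℝ} (hγ : 1 < γ) :
    ∫ θ in 0..2 * π, (γ - cos θ)⁻¹ = 2 * π / √(γ ^ 2 - 1) := by
  set d := √(γ ^ 2 - 1)
  have hd_pos : 0 < d := sqrt_pos.2 (by nlinarith)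
  have hd_sq : d ^ 2 = γ ^ 2 - 1 := sq_sqrt (by nlinarith)
  set r := γ - d
  have hr_pos : 0 < r := by nlinarith
  have hr : |r| < 1 := by rw [abs_of_pos hr_pos]; nlinarith
  have hkernel (θ : ℝ) :
      (γ - cos θ)⁻¹ = d⁻¹ * ((1 - r ^ 2) / (1 - 2 * r * cos θ + r ^ 2)) := by
    have hpos : 0 < γ - cos θ := by linarith [cos_le_one θ]
    have hden : 1 - 2 * r * cos θ + r ^ 2 = 2 * r * (γ - cos θ) := by
      linear_combination hd_sq
    have hnum : 1 - r ^ 2 = 2 * r * d := by linear_combination hd_sq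
    rw [hden, hnum]
    field_simp
  simp_rw [hkernel, intervalIntegral.integral_const_mul, integral_real_poissonKernel hr]
  field_simp

theorem stmt_10_general (a c k : ℝ) (hk : 0 < k) (hlt : k ^ 2 < c ^ 2 - 4 * a)
    (s γ : ℝ) (hs : s = Real.sqrt (c ^ 2 - 4 * a))
    (hγ : γ = s / Real.sqrt (s ^ 2 - k ^ 2))
    (u : ℝ → ℝ)
    (hu : ∀ z : ℝ, u z
      = k ^ 2 / (Real.sqrt (s ^ 2 - k ^ 2) * (γ - Real.cos (k * z))) - (s + c) / 2) :
    ∫ z in (0:ℝ)..(2 * Real.pi / k), u z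
      = 2 * Real.pi - (Real.pi / k) * (Real.sqrt (c ^ 2 - 4 * a) + c) := by
  set b := √(s ^ 2 - k ^ 2)
  have hs_sq : s ^ 2 = c ^ 2 - 4 * a := by rw [hs]; exact sq_sqrt (by nlinarith)
  have hb_pos : 0 < b := sqrt_pos.2 (by linarith)
  have hb_sq : b ^ 2 = s ^ 2 - k ^ 2 := sq_sqrt (by linarith)
  have hγ_sq : γ ^ 2 - 1 = (k / b) ^ 2 := by
    rw [hγ]; field_simp; linear_combination (-1) * hb_sq
  have hγ_pos : 0 < γ := by
    rw [hγ, hs]; exact div_pos (sqrt_pos.2 (by nlinarith)) hb_pos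
  have hγ_gt : 1 < γ := by nlinarith [pow_pos (div_pos hk hb_pos) 2]
  have hint :
      IntervalIntegrable (fun z => (γ - cos (k * z))⁻¹) MeasureTheory.volume 0 (2 * π / k) :=
    (Continuous.inv₀ (by fun_prop) fun z => by linarith [cos_le_one (k * z)]).intervalIntegrable _ _
  have hu' : u = fun z => k ^ 2 / b * (γ - cos (k * z))⁻¹ - (s + c) / 2 := by
    ext z; rw [hu z]; field_simp
  rw [hu', intervalIntegral.integral_sub (hint.const_mul _) intervalIntegrable_const,
    intervalIntegral.integral_const_mul,
    intervalIntegral.integral_comp_mul_left (fun y => (γ - cos y)⁻¹) hk.ne', mul_zero,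
    mul_div_cancel₀ _ hk.ne', integral_inv_sub_cos hγ_gt, hγ_sq, sqrt_sq (div_pos hk hb_pos).le,
    intervalIntegral.integral_const, ← hs, smul_eq_mul, smul_eq_mul]
  field_simp
  ring

/-- The mass over one period of Benjamin's explicit `2π/k`-periodic traveling-wave
profile of the Benjamin–Ono equation:
`∫₀^{2π/k} u = 2π − (π/k)(√(c²−4a) + c)`. -/
theorem stmt_10 (a c k : ℝ) (hk : 0 < k) (hc : c < 0) (hlt : k ^ 2 < c ^ 2 - 4 * a)
    (s γ : ℝ) (hs : s = Real.sqrt (c ^ 2 - 4 * a))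
    (hγ : γ = s / Real.sqrt (s ^ 2 - k ^ 2))
    (u : ℝ → ℝ)
    (hu : ∀ z : ℝ, u z
      = k ^ 2 / (Real.sqrt (s ^ 2 - k ^ 2) * (γ - Real.cos (k * z))) - (s + c) / 2) :
    ∫ z in (0:ℝ)..(2 * Real.pi / k), u z
      = 2 * Real.pi - (Real.pi / k) * (Real.sqrt (c ^ 2 - 4 * a) + c) :=
  stmt_10_general a c k hk hlt s γ hs hγ u hu
end

section
/- Fix k > 0 and define, on the open set of (a,c) ∈ ℝ² with c < 0 and k² < c² − 4a, the functions M(a,c) := 2π − (π/k)(√(c² − 4a) + c) and P(a,c) := −cπ + (π/(4k))·(√(c² − 4a) + c)². Then at every such (a,c) the Jacobian determinant satisfies ∂_aM·∂_cP − ∂_cM·∂_aP = −2π²/(k·√(c² − 4a)); in particular it is nonzero, so the map (a,c) ↦ (M,P) has invertible derivative throughout the existence region. -/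
open Real

/-! Benjamin's waves depend on `(a, c)` only through `w = √(c² − 4a) + c`, with
`M = 2π − (π/k) w` and `P = −πc + (π/(4k)) w²`. Since `∂_a w = −2/√(c² − 4a)` and
`∂_c w = w/√(c² − 4a)`, the terms in `w²` cancel in the Jacobian, leaving
`(π²/k) · ∂_a w`. -/

noncomputable def benjaminW (a c : ℝ) : ℝ := √(c ^ 2 - 4 * a) + c

section

variable {a c : ℝ}

theorem hasDerivAt_benjaminW_fst (h : 0 < c ^ 2 - 4 * a) :
    HasDerivAt (fun a' => benjaminW a' c) (-2 / √(c ^ 2 - 4 * a)) a := by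
  have hdiscr : HasDerivAt (fun a' : ℝ => c ^ 2 - 4 * a') (-4) a := by
    simpa using ((hasDerivAt_id a).const_mul 4).const_sub (c ^ 2)
  refine ((hdiscr.sqrt h.ne').add_const c).congr_deriv ?_
  have hs : √(c ^ 2 - 4 * a) ≠ 0 := (sqrt_pos.2 h).ne'
  field_simp
  ring

theorem hasDerivAt_benjaminW_snd (h : 0 < c ^ 2 - 4 * a) :
    HasDerivAt (fun c' => benjaminW a c') (benjaminW a c / √(c ^ 2 - 4 * a)) c := by
  have hdiscr : HasDerivAt (fun c' : ℝ => c' ^ 2 - 4 * a) (2 * c) c := by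
    simpa using (hasDerivAt_pow 2 c).sub_const (4 * a)
  refine ((hdiscr.sqrt h.ne').fun_add (hasDerivAt_id' c)).congr_deriv ?_
  have hs : √(c ^ 2 - 4 * a) ≠ 0 := (sqrt_pos.2 h).ne'
  rw [benjaminW]
  field_simp
  ring

end

/-- The Jacobian `{M,P}_{a,c}` of the mass and momentum of Benjamin's periodic
traveling waves of the Benjamin–Ono equation equals `−2π²/(k√(c²−4a))` and in
particular is nonzero throughout the existence region `c < 0`, `k² < c² − 4a`. -/
theorem stmt_12 (k : ℝ) (hk : 0 < k) (M P : ℝ → ℝ → ℝ)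
    (hM : ∀ a c : ℝ, M a c
      = 2 * Real.pi - (Real.pi / k) * (Real.sqrt (c ^ 2 - 4 * a) + c))
    (hP : ∀ a c : ℝ, P a c
      = -c * Real.pi + (Real.pi / (4 * k)) * (Real.sqrt (c ^ 2 - 4 * a) + c) ^ 2) :
    ∀ a c : ℝ, c < 0 → k ^ 2 < c ^ 2 - 4 * a →
      (deriv (fun a' => M a' c) a * deriv (fun c' => P a c') c
          - deriv (fun c' => M a c') c * deriv (fun a' => P a' c) a
        = -(2 * Real.pi ^ 2) / (k * Real.sqrt (c ^ 2 - 4 * a)))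
      ∧ deriv (fun a' => M a' c) a * deriv (fun c' => P a c') c
          - deriv (fun c' => M a c') c * deriv (fun a' => P a' c) a ≠ 0 := by
  intro a c _ hk2
  obtain rfl : M = fun a c => 2 * π - (π / k) * benjaminW a c := funext₂ hM
  obtain rfl : P = fun a c => -c * π + (π / (4 * k)) * benjaminW a c ^ 2 := funext₂ hP
  dsimp only
  have hdiscr : 0 < c ^ 2 - 4 * a := (pow_pos hk 2).trans hk2
  have hs : 0 < √(c ^ 2 - 4 * a) := sqrt_pos.2 hdiscr
  have hwa := hasDerivAt_benjaminW_fst hdiscr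
  have hwc := hasDerivAt_benjaminW_snd hdiscr
  rw [((hwa.const_mul (π / k)).const_sub (2 * π)).deriv,
    ((hwc.const_mul (π / k)).const_sub (2 * π)).deriv,
    (((hwa.fun_pow 2).const_mul (π / (4 * k))).const_add (-c * π)).deriv,
    (((hasDerivAt_neg c).mul_const π).fun_add ((hwc.fun_pow 2).const_mul (π / (4 * k)))).deriv]
  have hne : -(2 * π ^ 2) / (k * √(c ^ 2 - 4 * a)) ≠ 0 :=
    div_ne_zero (neg_ne_zero.2 (by positivity)) (by positivity)
  refine (fun hJ => ⟨hJ, hJ ▸ hne⟩) ?_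
  field_simp
  ring
end

section
/- Let T > 0 and c ≠ 0 be real numbers with c²T² > 1, and let D be the real 3×3 matrix with rows (−πT, π²T² − π²/c², 0), (1, πT, 0), (2π², 0, πT). Then the characteristic polynomial of D equals (X − πT)·(X² − (2π²T² − π²/c²)), and D has three distinct real eigenvalues, namely πT, πT·√(2 − 1/(c²T²)), and −πT·√(2 − 1/(c²T²)). -/
/-!
`D` is block lower triangular: a traceless `2 × 2` block, whose characteristic polynomial is
`X² − (π²T² + (π²T² − π²/c²))`, and the corner entry `πT`. With `s = √(2 − 1/(c²T²))` the hypothesis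
`c²T² > 1` gives `s > 1`, so `−πTs < πT < πTs`, and `(πTs)² = 2π²T² − π²/c²`.
-/

open Polynomial

theorem Matrix.charpoly_fin_three_of_traceless_block {R : Type*} [CommRing R] (a b e : R) :
    (!![-a, b, 0; 1, a, 0; e, 0, a] : Matrix (Fin 3) (Fin 3) R).charpoly
      = (X - C a) * (X ^ 2 - C (a ^ 2 + b)) := by
  rw [Matrix.charpoly, Matrix.det_fin_three]
  simp only [Matrix.charmatrix_apply_eq, Matrix.charmatrix_apply_ne, Matrix.of_apply,
    Matrix.cons_val', Matrix.cons_val_zero, Matrix.cons_val_one, Matrix.cons_val,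
    Matrix.cons_val_fin_one, ne_eq, Fin.reduceEq, not_false_eq_true, map_neg, map_zero, map_one,
    map_add, map_pow]
  ring

theorem Polynomial.isRoot_X_sub_C_mul_X_sq_sub_C_iff {R : Type*} [CommRing R] [IsDomain R]
    (a d x : R) : ((X - C a) * (X ^ 2 - C d)).IsRoot x ↔ x = a ∨ x ^ 2 = d := by
  simp [sub_eq_zero]

theorem Real.one_lt_sqrt_two_sub_one_div {x : ℝ} (hx : 1 < x) : 1 < √(2 - 1 / x) := by
  have : 1 / x < 1 := (div_lt_one (by linarith)).2 hx
  rw [Real.lt_sqrt zero_le_one]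
  linarith

theorem stmt_13_general (T c : ℝ) (hT : 0 < T) (hcT : 1 < c ^ 2 * T ^ 2)
    (D : Matrix (Fin 3) (Fin 3) ℝ)
    (hD : D = !![-(Real.pi * T), Real.pi ^ 2 * T ^ 2 - Real.pi ^ 2 / c ^ 2, 0;
                 1, Real.pi * T, 0;
                 2 * Real.pi ^ 2, 0, Real.pi * T]) :
    D.charpoly
        = (X - C (Real.pi * T))
            * (X ^ 2 - C (2 * Real.pi ^ 2 * T ^ 2 - Real.pi ^ 2 / c ^ 2))
      ∧ (Real.pi * T ≠ Real.pi * T * Real.sqrt (2 - 1 / (c ^ 2 * T ^ 2))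
          ∧ Real.pi * T ≠ -(Real.pi * T * Real.sqrt (2 - 1 / (c ^ 2 * T ^ 2)))
          ∧ Real.pi * T * Real.sqrt (2 - 1 / (c ^ 2 * T ^ 2))
              ≠ -(Real.pi * T * Real.sqrt (2 - 1 / (c ^ 2 * T ^ 2))))
      ∧ D.charpoly.IsRoot (Real.pi * T)
      ∧ D.charpoly.IsRoot (Real.pi * T * Real.sqrt (2 - 1 / (c ^ 2 * T ^ 2)))
      ∧ D.charpoly.IsRoot (-(Real.pi * T * Real.sqrt (2 - 1 / (c ^ 2 * T ^ 2)))) := by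
  set s := √(2 - 1 / (c ^ 2 * T ^ 2))
  have hs : 1 < s := Real.one_lt_sqrt_two_sub_one_div hcT
  have hπT : 0 < Real.pi * T := mul_pos Real.pi_pos hT
  have hcp : D.charpoly = (X - C (Real.pi * T))
      * (X ^ 2 - C (2 * Real.pi ^ 2 * T ^ 2 - Real.pi ^ 2 / c ^ 2)) := by
    rw [hD, Matrix.charpoly_fin_three_of_traceless_block]
    ring_nf
  have hsq : (Real.pi * T * s) ^ 2 = 2 * Real.pi ^ 2 * T ^ 2 - Real.pi ^ 2 / c ^ 2 := by
    rw [mul_pow, Real.sq_sqrt (Real.sqrt_pos.1 (one_pos.trans hs)).le]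
    field_simp
  have hlt₂ : Real.pi * T < Real.pi * T * s := lt_mul_of_one_lt_right hπT hs
  have hlt₁ : -(Real.pi * T * s) < Real.pi * T := by linarith
  refine ⟨hcp, ⟨hlt₂.ne, hlt₁.ne', (hlt₁.trans hlt₂).ne'⟩, ?_, ?_, ?_⟩ <;>
    rw [hcp, Polynomial.isRoot_X_sub_C_mul_X_sq_sub_C_iff]
  · exact .inl rfl
  · exact .inr hsq
  · exact .inr (by rw [neg_sq, hsq])

/-- The effective dispersion matrix `D(a=0,k,c)` of the Benjamin–Ono equation
(with `T = 2π/k`, `c²T² > 1`) has characteristic polynomial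
`(X − πT)(X² − (2π²T² − π²/c²))` and three distinct real eigenvalues
`πT` and `±πT√(2 − 1/(c²T²))`. -/
theorem stmt_13 (T c : ℝ) (hT : 0 < T) (hc : c ≠ 0) (hcT : 1 < c ^ 2 * T ^ 2)
    (D : Matrix (Fin 3) (Fin 3) ℝ)
    (hD : D = !![-(Real.pi * T), Real.pi ^ 2 * T ^ 2 - Real.pi ^ 2 / c ^ 2, 0;
                 1, Real.pi * T, 0;
                 2 * Real.pi ^ 2, 0, Real.pi * T]) :
    D.charpoly
        = (X - C (Real.pi * T))
            * (X ^ 2 - C (2 * Real.pi ^ 2 * T ^ 2 - Real.pi ^ 2 / c ^ 2))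
      ∧ (Real.pi * T ≠ Real.pi * T * Real.sqrt (2 - 1 / (c ^ 2 * T ^ 2))
          ∧ Real.pi * T ≠ -(Real.pi * T * Real.sqrt (2 - 1 / (c ^ 2 * T ^ 2)))
          ∧ Real.pi * T * Real.sqrt (2 - 1 / (c ^ 2 * T ^ 2))
              ≠ -(Real.pi * T * Real.sqrt (2 - 1 / (c ^ 2 * T ^ 2))))
      ∧ D.charpoly.IsRoot (Real.pi * T)
      ∧ D.charpoly.IsRoot (Real.pi * T * Real.sqrt (2 - 1 / (c ^ 2 * T ^ 2)))
      ∧ D.charpoly.IsRoot (-(Real.pi * T * Real.sqrt (2 - 1 / (c ^ 2 * T ^ 2)))) :=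
  stmt_13_general T c hT hcT D hD
end

section
/- The function g : (0,∞) → ℝ defined by g(k) := √(k·tanh(k)) − k is strictly decreasing on (0,∞) and strictly concave on (0,∞). -/
/-!
Write `h x = x * tanh x`, so that `g = √h - id` with `h' = t + x (1 - t²)` and
`h'' = 2 (1 - t²)(1 - x t)`, where `t = tanh x`. Strict concavity of `√h` amounts to
`2 h h'' < h'²`, and `h'² - 2 h h'' = (t - x (1 - t²))² + 4 x² t² (1 - t²) > 0`.
The derivative `h' / (2 √h) - 1` is negative iff `h'² < 4 h`, and
`4 h - h'² = (t - x (1 - t)²) (x (1 + t)² - t)`; written with `exp`, the two factors are positive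
because `exp (4x) > 1 + 4x` and `exp (-4x) > 1 - 4x`.
-/

open Real Set Filter Topology

namespace Real

theorem hasDerivAt_tanh (x : ℝ) : HasDerivAt tanh (1 - tanh x ^ 2) x := by
  have h := (hasDerivAt_sinh x).div (hasDerivAt_cosh x) (cosh_pos x).ne'
  rw [show tanh = sinh / cosh from funext tanh_eq_sinh_div_cosh]
  refine h.congr_deriv ?_
  rw [Pi.div_apply, div_pow]
  field_simp

theorem tanh_pos {x : ℝ} (hx : 0 < x) : 0 < tanh x := by
  rw [tanh_eq_sinh_div_cosh]
  exact div_pos (sinh_pos_iff.mpr hx) (cosh_pos x)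

theorem tanh_mul_exp_add_exp_neg (x : ℝ) : tanh x * (exp x + exp (-x)) = exp x - exp (-x) := by
  rw [tanh_eq]
  exact div_mul_cancel₀ _ (by positivity)

theorem mul_one_sub_tanh_sq_lt_tanh {x : ℝ} (hx : 0 < x) : x * (1 - tanh x) ^ 2 < tanh x := by
  have ht := tanh_mul_exp_add_exp_neg x
  set a := exp x
  set b := exp (-x)
  have hab : a * b = 1 := by rw [← exp_add, add_neg_cancel, exp_zero]
  have hexp : 4 * x + 1 < a ^ 4 := by
    rw [← exp_nat_mul]
    exact_mod_cast add_one_lt_exp (by positivity : 4 * x ≠ 0)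
  have key : x * (1 - tanh x) ^ 2 * (a + b) ^ 2 = 4 * x * b ^ 2 := by
    linear_combination x * (tanh x * (a + b) + (a - b) - 2 * (a + b)) * ht
  have : 4 * x * b ^ 2 < tanh x * (a + b) ^ 2 := by
    have h4 : a ^ 4 * b ^ 2 = a ^ 2 := by linear_combination (a ^ 3 * b + a ^ 2) * hab
    rw [sq (a + b), ← mul_assoc, ht]
    nlinarith [mul_lt_mul_of_pos_right hexp (by positivity : 0 < b ^ 2)]
  exact lt_of_mul_lt_mul_right (key.trans_lt this) (sq_nonneg _)

theorem tanh_lt_mul_one_add_tanh_sq {x : ℝ} (hx : 0 < x) : tanh x < x * (1 + tanh x) ^ 2 := by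
  have ht := tanh_mul_exp_add_exp_neg x
  set a := exp x
  set b := exp (-x)
  have hab : a * b = 1 := by rw [← exp_add, add_neg_cancel, exp_zero]
  have hexp : -4 * x + 1 < b ^ 4 := by
    rw [← exp_nat_mul, Nat.cast_ofNat, mul_neg, ← neg_mul]
    exact add_one_lt_exp (by positivity)
  have key : x * (1 + tanh x) ^ 2 * (a + b) ^ 2 = 4 * x * a ^ 2 := by
    linear_combination x * (tanh x * (a + b) + (a - b) + 2 * (a + b)) * ht
  have : tanh x * (a + b) ^ 2 < 4 * x * a ^ 2 := by
    have h4 : b ^ 4 * a ^ 2 = b ^ 2 := by linear_combination (b ^ 3 * a + b ^ 2) * hab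
    rw [sq (a + b), ← mul_assoc, ht]
    nlinarith [mul_lt_mul_of_pos_right hexp (by positivity : 0 < a ^ 2)]
  exact lt_of_mul_lt_mul_right (this.trans_eq key.symm) (sq_nonneg _)

end Real

theorem strictConcaveOn_sqrt_comp_of_hasDerivAt {D : Set ℝ} (hD : Convex ℝ D) (hDo : IsOpen D)
    {f f' f'' : ℝ → ℝ} (hf : ∀ x ∈ D, HasDerivAt f (f' x) x)
    (hf' : ∀ x ∈ D, HasDerivAt f' (f'' x) x) (hpos : ∀ x ∈ D, 0 < f x)
    (hconc : ∀ x ∈ D, 2 * f x * f'' x < f' x ^ 2) :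
    StrictConcaveOn ℝ D fun x => √(f x) := by
  have hsqrt : ∀ x ∈ D, HasDerivAt (fun y => √(f y)) (f' x / (2 * √(f x))) x := fun x hx =>
    (hf x hx).sqrt (hpos x hx).ne'
  refine strictConcaveOn_of_deriv2_neg hD
    (fun x hx => (hsqrt x hx).continuousAt.continuousWithinAt) fun x hx => ?_
  rw [hDo.interior_eq] at hx
  have hs : 0 < √(f x) := sqrt_pos.mpr (hpos x hx)
  have hderiv : deriv (fun y => √(f y)) =ᶠ[𝓝 x] fun y => f' y / (2 * √(f y)) :=
    eventually_of_mem (hDo.mem_nhds hx) fun y hy => (hsqrt y hy).deriv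
  have hsqrt' : HasDerivAt (fun y => f' y / (2 * √(f y))) _ x :=
    (hf' x hx).div ((hsqrt x hx).const_mul 2) (by positivity)
  rw [Function.iterate_succ_apply, Function.iterate_one, hderiv.deriv_eq, hsqrt'.deriv]
  have hsq : √(f x) ^ 2 = f x := sq_sqrt (hpos x hx).le
  apply div_neg_of_neg_of_pos _ (by positivity)
  field_simp
  rw [hsq]
  linarith [hconc x hx]

theorem hasDerivAt_mul_tanh (x : ℝ) :
    HasDerivAt (fun y => y * tanh y) (tanh x + x * (1 - tanh x ^ 2)) x := by
  have h : HasDerivAt (fun y => y * tanh y) _ x := (hasDerivAt_id' x).mul (hasDerivAt_tanh x)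
  exact h.congr_deriv (by ring)

theorem hasDerivAt_tanh_add_mul_one_sub_tanh_sq (x : ℝ) :
    HasDerivAt (fun y => tanh y + y * (1 - tanh y ^ 2))
      (2 * (1 - tanh x ^ 2) * (1 - x * tanh x)) x := by
  have h : HasDerivAt (fun y => tanh y + y * (1 - tanh y ^ 2)) _ x :=
    (hasDerivAt_tanh x).add ((hasDerivAt_id' x).mul (((hasDerivAt_tanh x).pow 2).const_sub 1))
  exact h.congr_deriv (by ring)

theorem strictConcaveOn_sqrt_mul_tanh : StrictConcaveOn ℝ (Ioi 0) fun x => √(x * tanh x) := by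
  refine strictConcaveOn_sqrt_comp_of_hasDerivAt (convex_Ioi 0) isOpen_Ioi
    (fun x _ => hasDerivAt_mul_tanh x) (fun x _ => hasDerivAt_tanh_add_mul_one_sub_tanh_sq x)
    (fun x hx => mul_pos hx (tanh_pos hx)) fun x hx => ?_
  have ht := tanh_pos hx
  have ht1 : 0 < 1 - tanh x ^ 2 := sub_pos.mpr (tanh_sq_lt_one x)
  have hid : (tanh x + x * (1 - tanh x ^ 2)) ^ 2
      - 2 * (x * tanh x) * (2 * (1 - tanh x ^ 2) * (1 - x * tanh x))
      = (tanh x - x * (1 - tanh x ^ 2)) ^ 2 + 4 * x ^ 2 * tanh x ^ 2 * (1 - tanh x ^ 2) := by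
    ring
  nlinarith [sq_nonneg (tanh x - x * (1 - tanh x ^ 2)),
    mul_pos (mul_pos (pow_pos hx 2) (pow_pos ht 2)) ht1]

theorem strictAntiOn_sqrt_mul_tanh_sub_self :
    StrictAntiOn (fun x => √(x * tanh x) - x) (Ioi 0) := by
  have hderiv : ∀ x ∈ Ioi (0 : ℝ), HasDerivAt (fun x => √(x * tanh x) - x)
      ((tanh x + x * (1 - tanh x ^ 2)) / (2 * √(x * tanh x)) - 1) x := fun x hx =>
    ((hasDerivAt_mul_tanh x).sqrt (mul_pos hx (tanh_pos hx)).ne').sub (hasDerivAt_id x)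
  refine strictAntiOn_of_deriv_neg (convex_Ioi 0)
    (fun x hx => (hderiv x hx).continuousAt.continuousWithinAt) fun x hx => ?_
  rw [interior_Ioi] at hx
  have ht := tanh_pos hx
  have hs : 0 < √(x * tanh x) := sqrt_pos.mpr (mul_pos hx ht)
  rw [(hderiv x hx).deriv, sub_neg, div_lt_one (by positivity)]
  have h₁ := mul_one_sub_tanh_sq_lt_tanh hx
  have h₂ := tanh_lt_mul_one_add_tanh_sq hx
  have hsq : (tanh x + x * (1 - tanh x ^ 2)) ^ 2 < (2 * √(x * tanh x)) ^ 2 := by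
    rw [mul_pow, sq_sqrt (mul_pos hx ht).le]
    have hfactor : 4 * (x * tanh x) - (tanh x + x * (1 - tanh x ^ 2)) ^ 2
        = (tanh x - x * (1 - tanh x) ^ 2) * (x * (1 + tanh x) ^ 2 - tanh x) := by ring
    nlinarith [mul_pos (sub_pos.mpr h₁) (sub_pos.mpr h₂)]
  exact lt_of_pow_lt_pow_left₀ 2 (by positivity) hsq

/-- The function `g(k) = √(k·tanh k) − k = k(m(k) − 1)`, where `m` is the Whitham
dispersion symbol, is strictly decreasing and strictly concave on `(0,∞)`. -/
theorem stmt_15 (g : ℝ → ℝ)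
    (hg : ∀ k : ℝ, g k = Real.sqrt (k * Real.tanh k) - k) :
    StrictAntiOn g (Set.Ioi (0 : ℝ)) ∧ StrictConcaveOn ℝ (Set.Ioi (0 : ℝ)) g := by
  obtain rfl : g = fun k => √(k * tanh k) - k := funext hg
  exact ⟨strictAntiOn_sqrt_mul_tanh_sub_self,
    strictConcaveOn_sqrt_mul_tanh.sub_convexOn (convexOn_id (convex_Ioi 0))⟩
end

section
/- For real α and k > 0 define Λ(k, α) := 2·k^{4α}·α·(1+α)⁴·(2^{α+1} − 3 − α)/(2^α − 1). Then Λ(k, α) < 0 for all k > 0 whenever 1/2 < α < 1, and Λ(k, α) > 0 for all k > 0 whenever α > 1. -/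
/-!
For `α > 0` the prefactor `2k^{4α}α(1+α)⁴` and the denominator `2^α − 1` are positive, so `Λ(k, α)`
has the sign of `2^{α+1} − 3 − α = 2(2^α − 1 − α) + (α − 1)`. Bernoulli's inequality gives
`2^α < 1 + α` for `0 < α < 1` and `2^α > 1 + α` for `α > 1`, and in either case both summands
have the sign of `α − 1`.
-/

lemma two_rpow_add_one_sub_three_sub_neg {α : ℝ} (hα₀ : 0 < α) (hα₁ : α < 1) :
    (2 : ℝ) ^ (α + 1) - 3 - α < 0 := by
  have bernoulli : (1 + 1 : ℝ) ^ α < 1 + α * 1 :=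
    rpow_one_add_lt_one_add_mul_self (by norm_num) one_ne_zero hα₀ hα₁
  rw [Real.rpow_add_one two_ne_zero]
  norm_num at bernoulli
  linarith

lemma two_rpow_add_one_sub_three_sub_pos {α : ℝ} (hα : 1 < α) :
    0 < (2 : ℝ) ^ (α + 1) - 3 - α := by
  have bernoulli : 1 + α * 1 < (1 + 1 : ℝ) ^ α :=
    one_add_mul_self_lt_rpow_one_add (by norm_num) one_ne_zero hα
  rw [Real.rpow_add_one two_ne_zero]
  norm_num at bernoulli
  linarith

lemma two_rpow_sub_one_pos {α : ℝ} (hα : 0 < α) : 0 < (2 : ℝ) ^ α - 1 :=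
  sub_pos.2 (Real.one_lt_rpow one_lt_two hα)

lemma index_prefactor_pos {k α : ℝ} (hk : 0 < k) (hα : 0 < α) :
    0 < 2 * k ^ (4 * α) * α * (1 + α) ^ 4 := by
  have := Real.rpow_pos_of_pos hk (4 * α)
  positivity

/-- Sign of the small-amplitude modulational instability index
`Λ(k,α) = 2k^{4α}α(1+α)⁴(2^{α+1} − 3 − α)/(2^α − 1)` for the fractional KdV
equation: negative for all `k > 0` when `1/2 < α < 1`, positive for all `k > 0`
when `α > 1`. -/
theorem stmt_17 (Λ : ℝ → ℝ → ℝ)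
    (hΛ : ∀ k α : ℝ, Λ k α
      = 2 * k ^ (4 * α) * α * (1 + α) ^ 4 * ((2 : ℝ) ^ (α + 1) - 3 - α)
          / ((2 : ℝ) ^ α - 1)) :
    (∀ k α : ℝ, 0 < k → 1 / 2 < α → α < 1 → Λ k α < 0) ∧
    (∀ k α : ℝ, 0 < k → 1 < α → 0 < Λ k α) := by
  refine ⟨fun k α hk hα₀ hα₁ => ?_, fun k α hk hα => ?_⟩
  · have hα : 0 < α := by linarith
    rw [hΛ]
    exact div_neg_of_neg_of_pos
      (mul_neg_of_pos_of_neg (index_prefactor_pos hk hα)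
        (two_rpow_add_one_sub_three_sub_neg hα hα₁))
      (two_rpow_sub_one_pos hα)
  · have hα₀ : 0 < α := by linarith
    rw [hΛ]
    exact div_pos
      (mul_pos (index_prefactor_pos hk hα₀) (two_rpow_add_one_sub_three_sub_pos hα))
      (two_rpow_sub_one_pos hα₀)
end
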